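/- arXiv:1902.00138 — 3 statements merged into one kernel-verified Lean document; each statement's English description precedes it below -/
import Mathlib

section
/- Consider one agent in the single-stage mechanism M. Let θ ∈ ℝ be the agent's true priority misalignment, θ̄ ∈ ℝ the lowest misalignment reported by the other agents, h : ℝ → ℝ → ℝ the effort-cost function, and P : ℝ → ℝ → ℝ the payment function. Assume (i) for every γ ∈ ℝ, if θ ≥ θ̄ then P θ̄ γ ≤ h θ γ, and (ii) if θ < θ̄ then there exists γ ∈ ℝ with P θ̄ γ > h θ γ. Define the agent's utility from bidding b ∈ ℝ and realizing γ ∈ ℝ by U b γ = P θ̄ γ − h θ γ if b < θ̄, and U b γ = 0 otherwise. Then mechanism M is incentive compatible: for every bid b ∈ ℝ and every γ ∈ ℝ there exists γ' ∈ ℝ such that U b γ ≤ U θ γ', i.e., no misreport can yield more utility than truthfully bidding θ. -/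
/-- Single-stage mechanism M is incentive compatible: no misreport can yield
more utility than truthfully bidding the true misalignment θ. -/
theorem mechanism_M_incentive_compatible
    (θ θbar : ℝ) (h P : ℝ → ℝ → ℝ)
    (hP1 : ∀ γ : ℝ, θ ≥ θbar → P θbar γ ≤ h θ γ)
    (hP2 : θ < θbar → ∃ γ : ℝ, P θbar γ > h θ γ)
    (U : ℝ → ℝ → ℝ)
    (hU : ∀ b γ : ℝ, U b γ = if b < θbar then P θbar γ - h θ γ else 0) :
    ∀ b γ : ℝ, ∃ γ' : ℝ, U b γ ≤ U θ γ' := by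
  intro b γ
  by_cases ht : θ < θbar
  · by_cases hb : b < θbar
    · exact ⟨γ, by simp [hU, hb, ht]⟩
    · obtain ⟨γ', hγ'⟩ := hP2 ht
      exact ⟨γ', by simp [hU, hb, ht]; linarith⟩
  · refine ⟨γ, ?_⟩
    have := hP1 γ (le_of_not_gt ht)
    by_cases hb : b < θbar <;> simp [hU, hb, ht] <;> linarith
end

section
/- Let I ≥ 1, let θ : Fin I → ℝ with θ i ≥ 0 for all i be the agents' true priority misalignments, and let S : ℝ → ℝ be antitone (the principal's profit as a function of the realized misalignment). Let w ∈ Fin I be an agent with θ w = min over i of θ i, and let γ* ∈ [0, θ w] satisfy S γ + γ ≤ S γ* + γ* for all γ ∈ [0, θ w]. Then the pair (w, γ*) maximizes social welfare with linear effort cost: for every agent i ∈ Fin I and every γ with 0 ≤ γ ≤ θ i, S γ − (θ i − γ) ≤ S γ* − (θ w − γ*). -/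
/-- Social optimality of mechanism M with linear effort cost (single stage):
choosing the agent w with minimal true misalignment and the realized
misalignment γ* maximizing S γ + γ over [0, θ w] maximizes social welfare
S γ - (θ i - γ) over all agents i and feasible γ ∈ [0, θ i]. -/
theorem linear_cost_socially_optimal
    (I : ℕ) (hI : 1 ≤ I)
    (θ : Fin I → ℝ) (hθ : ∀ i, 0 ≤ θ i)
    (S : ℝ → ℝ) (hS : Antitone S)
    (w : Fin I) (hw : ∀ i, θ w ≤ θ i)
    (γstar : ℝ) (hγstar : γstar ∈ Set.Icc (0 : ℝ) (θ w))
    (hopt : ∀ γ ∈ Set.Icc (0 : ℝ) (θ w), S γ + γ ≤ S γstar + γstar) :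
    ∀ i : Fin I, ∀ γ : ℝ, 0 ≤ γ → γ ≤ θ i →
      S γ - (θ i - γ) ≤ S γstar - (θ w - γstar) := by
  intro i γ hγ0 hγθ
  set γ' := min γ (θ w) with hγ'
  have h1 : S γ ≤ S γ' := hS (min_le_left _ _)
  have h2 : γ - θ i ≤ γ' - θ w := by
    rcases le_total γ (θ w) with h | h
    · simp [hγ', min_eq_left h]
      linarith [hw i]
    · simp [hγ', min_eq_right h]
      linarith
  have h3 : S γ' + γ' ≤ S γstar + γstar :=
    hopt γ' ⟨le_min hγ0 (hθ w), min_le_right _ _⟩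
  linarith
end

section
/- Let I ≥ 1 and K ≥ 1, let θ : Fin I → Fin K → ℝ with θ i k ≥ 0 be the agents' true misalignments for each task, and let S : ℝ → ℝ be antitone. For each stage k ∈ Fin K let w k ∈ Fin I satisfy θ (w k) k = min over i of θ i k, and let γ* k ∈ [0, θ (w k) k] satisfy S γ + γ ≤ S (γ* k) + (γ* k) for all γ ∈ [0, θ (w k) k]. Then this stage-wise allocation and realization maximizes total social welfare with linear effort cost: for every assignment a : Fin K → Fin I and every γ : Fin K → ℝ with 0 ≤ γ k ≤ θ (a k) k for all k, the sum over k of [S (γ k) − (θ (a k) k − γ k)] is at most the sum over k of [S (γ* k) − (θ (w k) k − γ* k)]. -/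
/-- Social optimality of mechanism M₁ with fixed private information and linear
effort cost over K stages: stage-wise selecting the agent with minimal true
misalignment and the realized misalignment maximizing S γ + γ on the feasible
interval maximizes total social welfare. -/
theorem M1_socially_optimal
    (I K : ℕ) (hI : 1 ≤ I) (hK : 1 ≤ K)
    (θ : Fin I → Fin K → ℝ) (hθ : ∀ i k, 0 ≤ θ i k)
    (S : ℝ → ℝ) (hS : Antitone S)
    (w : Fin K → Fin I) (hw : ∀ (k : Fin K) (i : Fin I), θ (w k) k ≤ θ i k)
    (γstar : Fin K → ℝ)
    (hγstar : ∀ k : Fin K, γstar k ∈ Set.Icc (0 : ℝ) (θ (w k) k))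
    (hopt : ∀ k : Fin K, ∀ γ ∈ Set.Icc (0 : ℝ) (θ (w k) k),
      S γ + γ ≤ S (γstar k) + γstar k) :
    ∀ (a : Fin K → Fin I) (γ : Fin K → ℝ),
      (∀ k : Fin K, 0 ≤ γ k ∧ γ k ≤ θ (a k) k) →
      ∑ k, (S (γ k) - (θ (a k) k - γ k)) ≤
        ∑ k, (S (γstar k) - (θ (w k) k - γstar k)) := by
  intro a γ hγ
  apply Finset.sum_le_sum
  intro k _
  obtain ⟨h0, h1⟩ := hγ k
  by_cases hc : γ k ≤ θ (w k) k
  · have := hopt k (γ k) ⟨h0, hc⟩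
    have hwk := hw k (a k)
    linarith
  · push_neg at hc
    have hS1 : S (γ k) ≤ S (θ (w k) k) := hS hc.le
    have := hopt k (θ (w k) k) ⟨hθ _ _, le_refl _⟩
    linarith
end
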